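/- If P* ⊆ P(n̄) is admissible, then I_{P*} is an ideal of the monoid IOF_n^par. -/

import Mathlib

namespace IOFpar

/-- A partial injection on the chain `{1, …, n}`: a partial function with domain and
image contained in `{1, …, n}` that is injective where defined. -/
structure PInj (n : ℕ) where
  f : ℕ → Option ℕ
  mem_bounds : ∀ ⦃x y : ℕ⦄, f x = some y → x ∈ Finset.Icc 1 n ∧ y ∈ Finset.Icc 1 n
  inj : ∀ ⦃x₁ x₂ y : ℕ⦄, f x₁ = some y → f x₂ = some y → x₁ = x₂

/-- The domain of a partial injection. -/
def PInj.dom {n : ℕ} (α : PInj n) : Finset ℕ :=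
  (Finset.Icc 1 n).filter fun x => (α.f x).isSome

open Classical in
/-- The image of a partial injection. -/
noncomputable def PInj.im {n : ℕ} (α : PInj n) : Finset ℕ :=
  (Finset.Icc 1 n).filter fun y => ∃ x, α.f x = some y

/-- The rank of a partial injection: the size of its domain. -/
def PInj.rank {n : ℕ} (α : PInj n) : ℕ := α.dom.card

/-- The value of `α` at `x` (with junk value `0` outside the domain). -/
def PInj.app {n : ℕ} (α : PInj n) (x : ℕ) : ℕ := (α.f x).getD 0

/-- Composition of partial injections: `α.comp β` applies `α` first, then `β`
(so it corresponds to the product `αβ` with arguments written on the left). -/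
def PInj.comp {n : ℕ} (α β : PInj n) : PInj n where
  f x := (α.f x).bind β.f
  mem_bounds := by
    intro x y h
    rcases Option.bind_eq_some_iff.mp h with ⟨z, hz, hzy⟩
    exact ⟨(α.mem_bounds hz).1, (β.mem_bounds hzy).2⟩
  inj := by
    intro x₁ x₂ y h₁ h₂
    rcases Option.bind_eq_some_iff.mp h₁ with ⟨z₁, hz₁, hz₁y⟩
    rcases Option.bind_eq_some_iff.mp h₂ with ⟨z₂, hz₂, hz₂y⟩
    obtain rfl : z₁ = z₂ := β.inj hz₁y hz₂y
    exact α.inj hz₁ hz₂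

/-- The empty transformation `ε`. -/
def epsilon (n : ℕ) : PInj n where
  f _ := none
  mem_bounds := by intro x y h; simp at h
  inj := by intro x₁ x₂ y h; simp at h

/-- The fence (zig-zag) order on `{1, …, n}`: `k ≺ m` iff `|k - m| = 1`, `k` is odd
and `m` is even. -/
def fence (k m : ℕ) : Prop := (m = k + 1 ∨ k = m + 1) ∧ Odd k ∧ Even m

/-- `IOF n` is the set `IOF_n^par` of all partial injections on `{1, …, n}` that are
order-preserving, parity-preserving, fence-preserving, and whose inverse is also
fence-preserving. -/
def IOF (n : ℕ) : Set (PInj n) :=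
  {α | (∀ ⦃x y x' y' : ℕ⦄, α.f x = some x' → α.f y = some y' → x < y → x' < y') ∧
       (∀ ⦃x y : ℕ⦄, α.f x = some y → x % 2 = y % 2) ∧
       (∀ ⦃x y x' y' : ℕ⦄, α.f x = some x' → α.f y = some y' → fence x y → fence x' y') ∧
       (∀ ⦃x y x' y' : ℕ⦄, α.f x = some x' → α.f y = some y' → fence x' y' → fence x y)}

/-- The increasing enumeration of a finite set of naturals. -/
def sortedList (A : Finset ℕ) : List ℕ := A.sort (· ≤ ·)

/-- The relation `∼` on subsets of `{1, …, n}`: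
`A ∼ B` iff `|A| = |B|`, corresponding elements (in increasing order) have the
same parity, and consecutive elements are at distance 1 in `A` iff they are in `B`. -/
def sim (A B : Finset ℕ) : Prop :=
  A.card = B.card ∧
  (∀ (r : ℕ) (hA : r < (sortedList A).length) (hB : r < (sortedList B).length),
    (sortedList A)[r] % 2 = (sortedList B)[r] % 2) ∧
  (∀ (r : ℕ) (hA : r + 1 < (sortedList A).length) (hB : r + 1 < (sortedList B).length),
    ((sortedList A)[r + 1] = (sortedList A)[r] + 1 ↔
      (sortedList B)[r + 1] = (sortedList B)[r] + 1))

/-- `P ⊆ P(n̄)` is admissible: it contains `∅`, is convex, and is closed under `∼`. -/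
def Admissible (n : ℕ) (P : Set (Finset ℕ)) : Prop :=
  (∀ A ∈ P, A ⊆ Finset.Icc 1 n) ∧
  (∅ : Finset ℕ) ∈ P ∧
  (∀ A ∈ P, ∀ B ∈ P, ∀ C : Finset ℕ, A ⊆ C → C ⊆ B → C ∈ P) ∧
  (∀ y ∈ P, ∀ z : Finset ℕ, z ⊆ Finset.Icc 1 n → sim z y → z ∈ P)

/-- `I_X = {α ∈ IOF_n^par : dom(α) ∈ X}`. -/
def IX (n : ℕ) (X : Set (Finset ℕ)) : Set (PInj n) :=
  {α | α ∈ IOF n ∧ α.dom ∈ X}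

/-- An ideal of the monoid `IOF_n^par`. -/
def IsIdeal (n : ℕ) (I : Set (PInj n)) : Prop :=
  I.Nonempty ∧ I ⊆ IOF n ∧ ∀ a ∈ I, ∀ b ∈ IOF n, a.comp b ∈ I ∧ b.comp a ∈ I

/-- `del y t` is `y^[t+1]` in the paper's (1-based) notation: `y` with its `t`-th
smallest element removed (`t` being 0-based here). -/
def del (y : Finset ℕ) (t : ℕ) : Finset ℕ := y.erase ((sortedList y).getD t 0)

/-- `x ⊑ y`: `x` is obtained from `y` by removing one element. -/
def sqsub (x y : Finset ℕ) : Prop := ∃ t < y.card, x = del y t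

/-- `A_Γ = {Δ ∈ P : Δ ∼ Γ}`. -/
def Aset (P : Set (Finset ℕ)) (Γ : Finset ℕ) : Set (Finset ℕ) :=
  {Δ ∈ P | sim Δ Γ}

/-- `B_Γ = {Δ^[t] : Δ ∈ A_Γ, t ∈ {1,…,|Δ|}}`. -/
def Bset (P : Set (Finset ℕ)) (Γ : Finset ℕ) : Set (Finset ℕ) :=
  {D | ∃ Δ ∈ Aset P Γ, ∃ t < Δ.card, D = del Δ t}

/-- `B = {B_Γ : Γ ∈ P, |Γ| ≥ 2, |A_Γ| ≥ 2}`. -/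
def Bfam (P : Set (Finset ℕ)) : Set (Set (Finset ℕ)) :=
  {E | ∃ Γ ∈ P, 2 ≤ Γ.card ∧ 2 ≤ (Aset P Γ).ncard ∧ E = Bset P Γ}

/-- `C = {{g} : g ∈ P, (g ⊑ y for some y ∈ P with y ≁ z for all z ∈ P \ {y}) or
(g ⋢ z for all z ∈ P)}`. -/
def Cfam (P : Set (Finset ℕ)) : Set (Set (Finset ℕ)) :=
  {D | ∃ g ∈ P, D = {g} ∧
    ((∃ y ∈ P, sqsub g y ∧ ∀ z ∈ P, z ≠ y → ¬ sim y z) ∨ (∀ z ∈ P, ¬ sqsub g z))}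

/-- `BC_{Δ₁} = {Δ ∈ B ∪ C : x ∼ y for all x ∈ Δ, y ∈ Δ₁}`. -/
def BCset (P : Set (Finset ℕ)) (Δ₁ : Set (Finset ℕ)) : Set (Set (Finset ℕ)) :=
  {Δ ∈ Bfam P ∪ Cfam P | ∀ x ∈ Δ, ∀ y ∈ Δ₁, sim x y}

/-- `T_Δ = {c ∈ I_P : dom(c) ∈ Δ, im(c) ∈ Δ}`. -/
def Tset (n : ℕ) (P : Set (Finset ℕ)) (Δ : Set (Finset ℕ)) : Set (PInj n) :=
  {c ∈ IX n P | c.dom ∈ Δ ∧ c.im ∈ Δ}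

/-- `T_Q` for a pair `Q = (Q₁, Q₂)`. -/
def TQ (n : ℕ) (P : Set (Finset ℕ)) (Q₁ Q₂ : Set (Set (Finset ℕ))) : Set (PInj n) :=
  {c ∈ IX n P | (∃ Δ ∈ Q₁, c.dom ∈ Δ) ∧ (∃ Δ ∈ Q₂, c.im ∈ Δ)}

/-- `I_P^u`: the elements of `I_P` that are not expressible in the special product form. -/
def Iu (n : ℕ) (P : Set (Finset ℕ)) : Set (PInj n) :=
  {α ∈ IX n P | ¬ ∃ y₁ ∈ P, ∃ z₁ ∈ P, ∃ y₂ ∈ P, ∃ z₂ ∈ P, ∃ r < y₁.card, ∃ s < y₁.card,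
    y₁.card = z₁.card ∧ 2 ≤ y₁.card ∧
    sim y₂ y₁ ∧ sim z₂ z₁ ∧
    del y₁ r = y₁ ∩ z₁ ∧ del z₁ s = y₁ ∩ z₁ ∧
    sim (del y₂ r) (del z₂ s) ∧ sim (del z₂ s) (y₁ ∩ z₁) ∧
    α.dom = del y₂ r ∧ α.im = del z₂ s}

/-- `T` is a subsemigroup of `S` (a subset of `S` closed under composition). -/
def IsSubsemigroup (n : ℕ) (S T : Set (PInj n)) : Prop :=
  T ⊆ S ∧ ∀ a ∈ T, ∀ b ∈ T, a.comp b ∈ T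

/-- `T` is a maximal subsemigroup of `S`. -/
def IsMaxSubsemigroup (n : ℕ) (S T : Set (PInj n)) : Prop :=
  IsSubsemigroup n S T ∧ T ≠ S ∧
  ∀ U : Set (PInj n), IsSubsemigroup n S U → T ⊆ U → U ⊆ S → U = T ∨ U = S

/-- The left "translate set" `Ma` in the monoid `M = IOF_n^par`. -/
def lset (n : ℕ) (a : PInj n) : Set (PInj n) := {c | ∃ m ∈ IOF n, m.comp a = c}

/-- The right "translate set" `aM` in the monoid `M = IOF_n^par`. -/
def rset (n : ℕ) (a : PInj n) : Set (PInj n) := {c | ∃ m ∈ IOF n, a.comp m = c}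

/-- The two-sided "translate set" `MaM` in the monoid `M = IOF_n^par`. -/
def jset (n : ℕ) (a : PInj n) : Set (PInj n) :=
  {c | ∃ m₁ ∈ IOF n, ∃ m₂ ∈ IOF n, (m₁.comp a).comp m₂ = c}

/-!
`I_{P*}` is nonempty because `ε` has domain `∅ ∈ P*`. For `a ∈ I_{P*}` and `b ∈ IOF_n^par`,
`dom(ab) ⊆ dom(a)`, so `dom(ab) ∈ P*` by convexity between `∅` and `dom(a)`. For `ba`, the
set `S = dom(ba)` is mapped by `b` into `dom(a)`, so `Sb ∈ P*` by convexity; and `S ∼ Sb`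
because `b` is order- and parity-preserving and, being fence-preserving in both directions,
maps consecutive integers exactly to consecutive integers. Closure under `∼` gives `S ∈ P*`.
-/

theorem succ_eq_iff_lt_and_fence {x y : ℕ} : y = x + 1 ↔ x < y ∧ (fence x y ∨ fence y x) := by
  unfold fence
  constructor
  · rintro rfl
    rcases Nat.even_or_odd x with hx | hx
    · exact ⟨x.lt_succ_self, .inr ⟨.inr rfl, hx.add_one, hx⟩⟩
    · exact ⟨x.lt_succ_self, .inl ⟨.inl rfl, hx, hx.add_one⟩⟩
  · rintro ⟨hxy, ⟨h, -⟩ | ⟨h, -⟩⟩ <;> omega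

theorem sortedList_image {f : ℕ → ℕ} {S : Finset ℕ} (hf : StrictMonoOn f S) :
    sortedList (S.image f) = (sortedList S).map f := by
  unfold sortedList
  rw [← Finset.sort_val, Finset.image_val_of_injOn hf.injOn, ← Finset.sort_val,
    Multiset.map_sort _ _ _ _ fun a ha b hb => (hf.le_iff_le ha hb).symm]

theorem sim_image {f : ℕ → ℕ} {S : Finset ℕ} (hf : StrictMonoOn f S)
    (hparity : ∀ x ∈ S, x % 2 = f x % 2)
    (hsucc : ∀ x ∈ S, ∀ y ∈ S, y = x + 1 ↔ f y = f x + 1) :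
    sim S (S.image f) := by
  have hmem : ∀ (r : ℕ) (hr : r < (sortedList S).length), (sortedList S)[r] ∈ S :=
    fun r hr => (Finset.mem_sort _).mp (List.getElem_mem hr)
  refine ⟨(Finset.card_image_of_injOn hf.injOn).symm, fun r hA _ => ?_, fun r hA _ => ?_⟩
  · simp only [sortedList_image hf, List.getElem_map]
    exact hparity _ (hmem r hA)
  · simp only [sortedList_image hf, List.getElem_map]
    exact hsucc _ (hmem r (by omega)) _ (hmem (r + 1) hA)

namespace PInj

variable {n : ℕ}

theorem mem_dom_iff (α : PInj n) {x : ℕ} : x ∈ α.dom ↔ ∃ y, α.f x = some y := by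
  simp only [PInj.dom, Finset.mem_filter, Option.isSome_iff_exists, and_iff_right_iff_imp]
  rintro ⟨y, hy⟩
  exact (α.mem_bounds hy).1

theorem f_eq_some_app (α : PInj n) {x : ℕ} (hx : x ∈ α.dom) : α.f x = some (α.app x) := by
  obtain ⟨y, hy⟩ := α.mem_dom_iff.mp hx
  simp [PInj.app, hy]

theorem comp_f_eq_some (α β : PInj n) {x z : ℕ} :
    (α.comp β).f x = some z ↔ ∃ y, α.f x = some y ∧ β.f y = some z :=
  Option.bind_eq_some_iff

theorem app_mem_dom_of_mem_dom_comp (α β : PInj n) {x : ℕ} (hx : x ∈ (α.comp β).dom) :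
    x ∈ α.dom ∧ α.app x ∈ β.dom := by
  obtain ⟨z, hz⟩ := (α.comp β).mem_dom_iff.mp hx
  obtain ⟨y, hy, hyz⟩ := (α.comp_f_eq_some β).mp hz
  have hαx : x ∈ α.dom := α.mem_dom_iff.mpr ⟨y, hy⟩
  refine ⟨hαx, β.mem_dom_iff.mpr ⟨z, ?_⟩⟩
  rwa [← Option.some_inj.mp (hy.symm.trans (α.f_eq_some_app hαx))]

theorem dom_comp_subset (α β : PInj n) : (α.comp β).dom ⊆ α.dom :=
  fun _ hx => (α.app_mem_dom_of_mem_dom_comp β hx).1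

theorem image_app_dom_comp_subset (α β : PInj n) : (α.comp β).dom.image α.app ⊆ β.dom := by
  simp only [Finset.image_subset_iff]
  exact fun _ hx => (α.app_mem_dom_of_mem_dom_comp β hx).2

end PInj

theorem epsilon_mem_IOF (n : ℕ) : epsilon n ∈ IOF n := by
  simp [IOF, epsilon]

theorem epsilon_dom (n : ℕ) : (epsilon n).dom = ∅ := by
  ext x
  simp [PInj.dom, epsilon]

namespace IOF

variable {n : ℕ} {α β : PInj n}

theorem comp_mem (hα : α ∈ IOF n) (hβ : β ∈ IOF n) : α.comp β ∈ IOF n := by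
  obtain ⟨hα₁, hα₂, hα₃, hα₄⟩ := hα
  obtain ⟨hβ₁, hβ₂, hβ₃, hβ₄⟩ := hβ
  simp only [IOF, Set.mem_ofPred_eq, PInj.comp_f_eq_some]
  refine ⟨?_, ?_, ?_, ?_⟩
  · rintro x y x' y' ⟨z, hz, hzx⟩ ⟨w, hw, hwy⟩ hxy
    exact hβ₁ hzx hwy (hα₁ hz hw hxy)
  · rintro x y ⟨z, hz, hzy⟩
    exact (hα₂ hz).trans (hβ₂ hzy)
  · rintro x y x' y' ⟨z, hz, hzx⟩ ⟨w, hw, hwy⟩ hxy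
    exact hβ₃ hzx hwy (hα₃ hz hw hxy)
  · rintro x y x' y' ⟨z, hz, hzx⟩ ⟨w, hw, hwy⟩ hxy
    exact hα₄ hz hw (hβ₄ hzx hwy hxy)

theorem lt_iff (hα : α ∈ IOF n) {x y x' y' : ℕ} (hx : α.f x = some x') (hy : α.f y = some y') :
    x < y ↔ x' < y' := by
  refine ⟨hα.1 hx hy, fun h => ?_⟩
  rcases lt_trichotomy x y with hxy | rfl | hyx
  · exact hxy
  · cases hx.symm.trans hy
    exact absurd h (lt_irrefl _)
  · exact absurd (hα.1 hy hx hyx) h.not_gt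

theorem fence_iff (hα : α ∈ IOF n) {x y x' y' : ℕ} (hx : α.f x = some x')
    (hy : α.f y = some y') : fence x y ↔ fence x' y' :=
  ⟨hα.2.2.1 hx hy, hα.2.2.2 hx hy⟩

theorem succ_eq_iff (hα : α ∈ IOF n) {x y x' y' : ℕ} (hx : α.f x = some x')
    (hy : α.f y = some y') : y = x + 1 ↔ y' = x' + 1 := by
  rw [succ_eq_iff_lt_and_fence, succ_eq_iff_lt_and_fence, IOF.lt_iff hα hx hy,
    IOF.fence_iff hα hx hy, IOF.fence_iff hα hy hx]

theorem sim_image_app (hα : α ∈ IOF n) {S : Finset ℕ} (hS : S ⊆ α.dom) :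
    sim S (S.image α.app) := by
  have hf : ∀ x ∈ S, α.f x = some (α.app x) := fun x hx => α.f_eq_some_app (hS hx)
  exact sim_image (fun x hx y hy hxy => hα.1 (hf x hx) (hf y hy) hxy)
    (fun x hx => hα.2.1 (hf x hx)) (fun x hx y hy => IOF.succ_eq_iff hα (hf x hx) (hf y hy))

end IOF

theorem Admissible.mem_of_subset {n : ℕ} {P : Set (Finset ℕ)} (hP : Admissible n P)
    {A C : Finset ℕ} (hA : A ∈ P) (hCA : C ⊆ A) : C ∈ P :=
  hP.2.2.1 ∅ hP.2.1 A hA C (Finset.empty_subset C) hCA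

theorem statement_7_general (n : ℕ) (P : Set (Finset ℕ))
    (hP : Admissible n P) : IsIdeal n (IX n P) := by
  refine ⟨⟨epsilon n, epsilon_mem_IOF n, (epsilon_dom n).symm ▸ hP.2.1⟩, fun _ ha => ha.1, ?_⟩
  rintro a ⟨ha, ha_dom⟩ b hb
  refine ⟨⟨IOF.comp_mem ha hb, hP.mem_of_subset ha_dom (a.dom_comp_subset b)⟩,
    ⟨IOF.comp_mem hb ha, ?_⟩⟩
  have h_image : (b.comp a).dom.image b.app ∈ P :=
    hP.mem_of_subset ha_dom (b.image_app_dom_comp_subset a)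
  exact hP.2.2.2 _ h_image _ (Finset.filter_subset _ _)
    (IOF.sim_image_app hb (b.dom_comp_subset a))

/-- If `P* ⊆ P(n̄)` is admissible, then `I_{P*}` is an ideal of
the monoid `IOF_n^par`. -/
theorem statement_7 (n : ℕ) (hn : 0 < n) (P : Set (Finset ℕ))
    (hP : Admissible n P) : IsIdeal n (IX n P) :=
  statement_7_general n P hP

end IOFpar
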